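/- arXiv:quant-ph/0101061 — 9 statements merged into one kernel-verified Lean document; each statement's English description precedes it below -/
import Mathlib

section
/- (Purification) Every density operator ρ on a finite-dimensional Hilbert space H can be extended to a pure state: there exists a finite-dimensional Hilbert space H_B and a unit vector Φ ∈ H ⊗ H_B such that the partial trace of |Φ⟩⟨Φ| over H_B equals ρ. Moreover, H_B can be chosen with dim H_B = rank ρ, so that the partial trace of |Φ⟩⟨Φ| over H has no zero eigenvalues. -/
/-!
Diagonalise `ρ = ∑ₖ λₖ uₖ uₖ*` with orthonormal eigenvectors `uₖ` and put
`Φ = ∑_{λₖ ≠ 0} √λₖ uₖ ⊗ eₖ`. Tracing out the second factor gives back the spectral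
decomposition of `ρ`; tracing out the first one gives `diag (λₖ)_{λₖ ≠ 0}` by orthonormality of
the `uₖ`, which is positive definite and has size `rank ρ`.
-/

open Finset Matrix ComplexOrder

namespace Matrix

variable {n ι : Type*} [Fintype ι]

/-- `Φ : n × ι → ℂ` is a vector of `ℂⁿ ⊗ ℂ^ι`; `partialTraceSnd Φ` and `partialTraceFst Φ` are the
partial traces of `|Φ⟩⟨Φ|` over the second and the first factor. -/
def partialTraceSnd (Φ : n × ι → ℂ) : Matrix n n ℂ :=
  of fun i j => ∑ l, Φ (i, l) * star (Φ (j, l))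

theorem partialTraceSnd_reindex {κ : Type*} [Fintype κ] (Φ : n × ι → ℂ) (e : κ ≃ ι) :
    partialTraceSnd (fun p => Φ (p.1, e p.2)) = partialTraceSnd Φ := by
  ext i j
  exact e.sum_comp fun l => Φ (i, l) * star (Φ (j, l))

variable [Fintype n]

def partialTraceFst (Φ : n × ι → ℂ) : Matrix ι ι ℂ :=
  of fun k l => ∑ i, Φ (i, k) * star (Φ (i, l))

theorem trace_partialTraceSnd (Φ : n × ι → ℂ) :
    (partialTraceSnd Φ).trace = ((∑ p, ‖Φ p‖ ^ 2 : ℝ) : ℂ) := by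
  push_cast
  simp only [partialTraceSnd, trace, diag, of_apply, Fintype.sum_prod_type, Complex.star_def,
    Complex.mul_conj']

variable [DecidableEq n] {A : Matrix n n ℂ}

namespace IsHermitian

theorem sum_star_eigenvectorUnitary_mul (hA : A.IsHermitian) (k l : n) :
    ∑ i, star (hA.eigenvectorUnitary i k) * hA.eigenvectorUnitary i l =
      (1 : Matrix n n ℂ) k l := by
  rw [← Unitary.coe_star_mul_self hA.eigenvectorUnitary, mul_apply]
  rfl

theorem apply_eq_sum_eigenvalues_mul (hA : A.IsHermitian) (i j : n) :
    A i j = ∑ k, (hA.eigenvalues k : ℂ) *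
      (hA.eigenvectorUnitary i k * star (hA.eigenvectorUnitary j k)) := by
  conv_lhs => rw [hA.spectral_theorem, Unitary.conjStarAlgAut_apply]
  simp only [mul_apply, diagonal_apply, Function.comp_apply, star_apply, mul_ite, mul_zero,
    Finset.sum_ite_eq', Finset.mem_univ, if_true]
  exact Finset.sum_congr rfl fun k _ => by rw [mul_right_comm, mul_comm]; rfl

noncomputable def purification (hA : A.IsHermitian) : n × {k // hA.eigenvalues k ≠ 0} → ℂ :=
  fun p => (√(hA.eigenvalues p.2) : ℂ) * hA.eigenvectorUnitary p.1 p.2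

theorem purification_mul_star (hA : A.IsHermitian) (i j : n)
    (k l : {k // hA.eigenvalues k ≠ 0}) :
    hA.purification (i, k) * star (hA.purification (j, l)) =
      (√(hA.eigenvalues k) * √(hA.eigenvalues l) : ℝ) *
        (hA.eigenvectorUnitary i k * star (hA.eigenvectorUnitary j l)) := by
  simp only [purification, star_mul', Complex.star_def, Complex.conj_ofReal]
  push_cast
  ring

end IsHermitian

namespace PosSemidef

theorem partialTraceSnd_purification (hA : A.PosSemidef) :
    partialTraceSnd hA.1.purification = A := by
  ext i j
  simp only [partialTraceSnd, of_apply, hA.1.purification_mul_star,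
    Real.mul_self_sqrt (hA.eigenvalues_nonneg _)]
  rw [hA.1.apply_eq_sum_eigenvalues_mul]
  refine Fintype.sum_of_injective _ Subtype.val_injective _ _ (fun k hk => ?_) fun _ => rfl
  simp [not_not.mp fun h => hk ⟨⟨k, h⟩, rfl⟩]

theorem partialTraceFst_purification (hA : A.PosSemidef) :
    partialTraceFst hA.1.purification =
      diagonal fun k : {k // hA.1.eigenvalues k ≠ 0} => (hA.1.eigenvalues k : ℂ) := by
  ext k l
  simp only [partialTraceFst, of_apply, hA.1.purification_mul_star, ← Finset.mul_sum,
    mul_comm (hA.1.eigenvectorUnitary _ k), hA.1.sum_star_eigenvectorUnitary_mul, one_apply,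
    diagonal_apply, Subtype.val_inj]
  rcases eq_or_ne k l with rfl | hkl
  · simp [Real.mul_self_sqrt (hA.eigenvalues_nonneg _)]
  · simp [hkl, hkl.symm]

theorem posDef_partialTraceFst_purification (hA : A.PosSemidef) :
    (partialTraceFst hA.1.purification).PosDef := by
  rw [hA.partialTraceFst_purification, posDef_diagonal_iff]
  exact fun k => Complex.zero_lt_real.mpr ((hA.eigenvalues_nonneg k).lt_of_ne' k.2)

end PosSemidef

end Matrix

/-- Purification: every density matrix ρ on ℂ^m admits a purification Φ ∈ H ⊗ H_B with
    dim H_B = rank ρ, whose partial trace over H_B is ρ and whose partial trace over H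
    is positive definite (no zero eigenvalues). -/
theorem stmt2 {m : ℕ} (ρ : Matrix (Fin m) (Fin m) ℂ)
    (hρ : ρ.PosSemidef) (htr : ρ.trace = 1) :
    ∃ (nB : ℕ) (Φ : Fin m × Fin nB → ℂ),
      nB = ρ.rank ∧
      (∑ p, ‖Φ p‖ ^ 2 = 1) ∧
      (∀ i j, ∑ l, Φ (i, l) * star (Φ (j, l)) = ρ i j) ∧
      (Matrix.of fun k l : Fin nB => ∑ i, Φ (i, k) * star (Φ (i, l))).PosDef := by
  set e := (Fintype.equivFin {k // hρ.1.eigenvalues k ≠ 0}).symm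
  set Φ : Fin m × Fin _ → ℂ := fun p => hρ.1.purification (p.1, e p.2)
  have hΦ : partialTraceSnd Φ = ρ :=
    (partialTraceSnd_reindex _ e).trans hρ.partialTraceSnd_purification
  refine ⟨_, Φ, ?_, ?_, fun i j => congrFun (congrFun hΦ i) j, ?_⟩
  · exact hρ.1.rank_eq_card_non_zero_eigs.symm
  · exact Complex.ofReal_eq_one.mp (by rw [← trace_partialTraceSnd, hΦ, htr])
  · exact hρ.posDef_partialTraceFst_purification.submatrix e.injective
end

section
/- (Uniqueness of purification) Let ρ be a density operator on finite-dimensional H, and let Φ ∈ H ⊗ H_B and Φ' ∈ H ⊗ H_{B'} be unit vectors both purifying ρ (i.e., partial traces over the second factors both equal ρ), such that the partial traces of |Φ⟩⟨Φ| and |Φ'⟩⟨Φ'| over H are nonsingular. Then there is a unitary U : H_B → H_{B'} with (I ⊗ U)Φ = Φ'. -/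
open Finset Matrix ComplexOrder

private lemma cancel_left_aux {n p : Type*} [Fintype n] [DecidableEq n] [Fintype p]
    (G : Matrix n n ℂ) [Invertible G] (M N : Matrix n p ℂ)
    (h : G * M = G * N) : M = N := by
  calc M = ⅟G * (G * M) := by rw [← Matrix.mul_assoc, invOf_mul_self, Matrix.one_mul]
    _ = ⅟G * (G * N) := by rw [h]
    _ = N := by rw [← Matrix.mul_assoc, invOf_mul_self, Matrix.one_mul]

private lemma cancel_right_aux {n p : Type*} [Fintype n] [DecidableEq n] [Fintype p]
    (G : Matrix n n ℂ) [Invertible G] (M N : Matrix p n ℂ)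
    (h : M * G = N * G) : M = N := by
  calc M = (M * G) * ⅟G := by rw [Matrix.mul_assoc, mul_invOf_self, Matrix.mul_one]
    _ = (N * G) * ⅟G := by rw [h]
    _ = N := by rw [Matrix.mul_assoc, mul_invOf_self, Matrix.mul_one]

/-- Uniqueness of purification: two purifications of the same density matrix ρ, both with
    nonsingular restriction to the purifying factor, are related by a unitary on the
    purifying factors: (I ⊗ U)Φ = Φ'. -/
theorem stmt3 {m nB nB' : ℕ} (ρ : Matrix (Fin m) (Fin m) ℂ)
    (hρ : ρ.PosSemidef) (htr : ρ.trace = 1)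
    (Φ : Fin m × Fin nB → ℂ) (Φ' : Fin m × Fin nB' → ℂ)
    (hΦ : ∑ p, ‖Φ p‖ ^ 2 = 1) (hΦ' : ∑ p, ‖Φ' p‖ ^ 2 = 1)
    (hpt : ∀ i j, ∑ l, Φ (i, l) * star (Φ (j, l)) = ρ i j)
    (hpt' : ∀ i j, ∑ l, Φ' (i, l) * star (Φ' (j, l)) = ρ i j)
    (hns : (Matrix.of fun k l : Fin nB => ∑ i, Φ (i, k) * star (Φ (i, l))).PosDef)
    (hns' : (Matrix.of fun k l : Fin nB' => ∑ i, Φ' (i, k) * star (Φ' (i, l))).PosDef) :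
    ∃ U : Matrix (Fin nB') (Fin nB) ℂ,
      Uᴴ * U = 1 ∧ U * Uᴴ = 1 ∧
      ∀ p : Fin m × Fin nB', Φ' p = ∑ k, U p.2 k * Φ (p.1, k) := by
  classical
  set A : Matrix (Fin m) (Fin nB) ℂ := Matrix.of fun i k => Φ (i, k) with hAdef
  set B : Matrix (Fin m) (Fin nB') ℂ := Matrix.of fun i l => Φ' (i, l) with hBdef
  have hAA : A * Aᴴ = ρ := by
    ext i j
    simpa [Matrix.mul_apply, Matrix.conjTranspose_apply, hAdef] using hpt i j
  have hBB : B * Bᴴ = ρ := by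
    ext i j
    simpa [Matrix.mul_apply, Matrix.conjTranspose_apply, hBdef] using hpt' i j
  have hG : (Aᴴ * A).PosDef := by
    have h := hns.transpose
    have he : (Matrix.of fun k l : Fin nB => ∑ i, Φ (i, k) * star (Φ (i, l)))ᵀ = Aᴴ * A := by
      ext k l
      simp [Matrix.mul_apply, Matrix.conjTranspose_apply, Matrix.transpose_apply, hAdef,
        mul_comm]
    rwa [he] at h
  have hG' : (Bᴴ * B).PosDef := by
    have h := hns'.transpose
    have he : (Matrix.of fun k l : Fin nB' => ∑ i, Φ' (i, k) * star (Φ' (i, l)))ᵀ = Bᴴ * B := by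
      ext k l
      simp [Matrix.mul_apply, Matrix.conjTranspose_apply, Matrix.transpose_apply, hBdef,
        mul_comm]
    rwa [he] at h
  haveI iG : Invertible (Aᴴ * A) := hG.isUnit.invertible
  haveI iG' : Invertible (Bᴴ * B) := hG'.isUnit.invertible
  set X : Matrix (Fin nB) (Fin nB') ℂ := ⅟(Aᴴ * A) * (Aᴴ * B) with hXdef
  set Y : Matrix (Fin nB') (Fin nB) ℂ := ⅟(Bᴴ * B) * (Bᴴ * A) with hYdef
  -- the projection onto col(A) fixes ρ = B * Bᴴ
  have hPrho : A * (⅟(Aᴴ * A) * (Aᴴ * (B * Bᴴ))) = B * Bᴴ := by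
    rw [hBB, ← hAA]
    have e : A * (⅟(Aᴴ * A) * (Aᴴ * (A * Aᴴ))) = (A * (⅟(Aᴴ * A) * (Aᴴ * A))) * Aᴴ := by
      simp only [Matrix.mul_assoc]
    rw [e, invOf_mul_self, Matrix.mul_one]
  have hAX : A * X = B := by
    have h2 : (A * X) * (Bᴴ * B) = B * (Bᴴ * B) := by
      have e1 : (A * X) * (Bᴴ * B) = (A * (⅟(Aᴴ * A) * (Aᴴ * (B * Bᴴ)))) * B := by
        rw [hXdef]; simp only [Matrix.mul_assoc]
      rw [e1, hPrho, Matrix.mul_assoc]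
    exact cancel_right_aux (Bᴴ * B) _ _ h2
  have hQrho : B * (⅟(Bᴴ * B) * (Bᴴ * (A * Aᴴ))) = A * Aᴴ := by
    rw [hAA, ← hBB]
    have e : B * (⅟(Bᴴ * B) * (Bᴴ * (B * Bᴴ))) = (B * (⅟(Bᴴ * B) * (Bᴴ * B))) * Bᴴ := by
      simp only [Matrix.mul_assoc]
    rw [e, invOf_mul_self, Matrix.mul_one]
  have hBY : B * Y = A := by
    have h2 : (B * Y) * (Aᴴ * A) = A * (Aᴴ * A) := by
      have e1 : (B * Y) * (Aᴴ * A) = (B * (⅟(Bᴴ * B) * (Bᴴ * (A * Aᴴ)))) * A := by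
        rw [hYdef]; simp only [Matrix.mul_assoc]
      rw [e1, hQrho, Matrix.mul_assoc]
    exact cancel_right_aux (Aᴴ * A) _ _ h2
  have hXY : X * Y = 1 := by
    apply cancel_left_aux (Aᴴ * A)
    have hA1 : A * (X * Y) = A := by rw [← Matrix.mul_assoc, hAX, hBY]
    calc (Aᴴ * A) * (X * Y) = Aᴴ * (A * (X * Y)) := by rw [Matrix.mul_assoc]
      _ = Aᴴ * A := by rw [hA1]
      _ = (Aᴴ * A) * 1 := by rw [Matrix.mul_one]
  have hYX : Y * X = 1 := by
    apply cancel_left_aux (Bᴴ * B)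
    have hB1 : B * (Y * X) = B := by rw [← Matrix.mul_assoc, hBY, hAX]
    calc (Bᴴ * B) * (Y * X) = Bᴴ * (B * (Y * X)) := by rw [Matrix.mul_assoc]
      _ = Bᴴ * B := by rw [hB1]
      _ = (Bᴴ * B) * 1 := by rw [Matrix.mul_one]
  have hXXH : X * Xᴴ = 1 := by
    apply cancel_left_aux (Aᴴ * A)
    apply cancel_right_aux (Aᴴ * A)
    have hBHA : (A * X) * (A * X)ᴴ = A * Aᴴ := by rw [hAX, hBB, hAA]
    have e1 : ((Aᴴ * A) * (X * Xᴴ)) * (Aᴴ * A) = Aᴴ * ((A * X) * (Xᴴ * Aᴴ)) * A := by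
      simp only [Matrix.mul_assoc]
    have e2 : Xᴴ * Aᴴ = (A * X)ᴴ := (Matrix.conjTranspose_mul A X).symm
    rw [e1, e2, hBHA]
    have e3 : Aᴴ * (A * Aᴴ) * A = ((Aᴴ * A) * 1) * (Aᴴ * A) := by
      rw [Matrix.mul_one]; simp only [Matrix.mul_assoc]
    rw [e3]
  have hY_eq : Y = Xᴴ := by
    have h1 : Y * (X * Xᴴ) = Y := by rw [hXXH, Matrix.mul_one]
    have h2 : Y * (X * Xᴴ) = (Y * X) * Xᴴ := (Matrix.mul_assoc Y X Xᴴ).symm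
    rw [← h1, h2, hYX, Matrix.one_mul]
  have hXHX : Xᴴ * X = 1 := by rw [← hY_eq, hYX]
  have hTct : (Xᵀ)ᴴ = (Xᴴ)ᵀ := by
    ext k l
    simp [Matrix.conjTranspose_apply, Matrix.transpose_apply]
  refine ⟨Xᵀ, ?_, ?_, ?_⟩
  · rw [hTct, ← Matrix.transpose_mul, hXXH, Matrix.transpose_one]
  · rw [hTct, ← Matrix.transpose_mul, hXHX, Matrix.transpose_one]
  · intro p
    have h := congrFun (congrFun hAX p.1) p.2
    rw [Matrix.mul_apply] at h
    rw [show Φ' p = B p.1 p.2 from rfl, ← h]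
    exact Finset.sum_congr rfl fun k _ => by
      simp [Matrix.transpose_apply, hAdef, mul_comm]
end

section
/- (Bell Telephone bound) Suppose for i = 1,2 we are given probability distributions p_i on triples (a, b₁, b₂) ∈ {-1,1}³. Define correlations C(A_i,B_j) = Σ a·b_j·p_i(a,b₁,b₂) (sum over a,b₁,b₂), and β = C(A₁,B₁) + C(A₁,B₂) + C(A₂,B₁) − C(A₂,B₂). Define p_ok = (1/2) Σ_{a,b₁,b₂} |（b₁+b₂)/2|·p₁(a,b₁,b₂) + (1/2) Σ_{a,b₁,b₂} |(b₁−b₂)/2|·p₂(a,b₁,b₂). Then p_ok ≥ β/4. In particular, if β > 2 then p_ok > 1/2. -/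
open Finset

/-- Sign of a Boolean outcome: `true ↦ 1`, `false ↦ -1`. -/
def sgn (b : Bool) : ℝ := if b then 1 else -1

/-- Bell's Telephone bound: with Bob's joint measurement and the stated decoding rule,
    Bob's success probability p_ok satisfies p_ok ≥ β/4; in particular β > 2 gives
    better-than-chance transmission. -/
theorem stmt4 (p₁ p₂ : Bool × Bool × Bool → ℝ)
    (hpos₁ : ∀ t, 0 ≤ p₁ t) (hpos₂ : ∀ t, 0 ≤ p₂ t)
    (hsum₁ : ∑ t, p₁ t = 1) (hsum₂ : ∑ t, p₂ t = 1)
    (β pok : ℝ)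
    (hβ : β = (∑ t, sgn t.1 * sgn t.2.1 * p₁ t)
            + (∑ t, sgn t.1 * sgn t.2.2 * p₁ t)
            + (∑ t, sgn t.1 * sgn t.2.1 * p₂ t)
            - (∑ t, sgn t.1 * sgn t.2.2 * p₂ t))
    (hpok : pok = (1/2) * (∑ t, |(sgn t.2.1 + sgn t.2.2) / 2| * p₁ t)
                + (1/2) * (∑ t, |(sgn t.2.1 - sgn t.2.2) / 2| * p₂ t)) :
    β / 4 ≤ pok ∧ (2 < β → 1/2 < pok) := by
  subst hβ hpok
  simp only [Fintype.sum_prod_type, Fintype.sum_bool, sgn] at *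
  norm_num at *
  obtain ⟨⟨⟨h1,h2⟩,h3,h4⟩,⟨h5,h6⟩,h7,h8⟩ := hpos₁
  obtain ⟨⟨⟨g1,g2⟩,g3,g4⟩,⟨g5,g6⟩,g7,g8⟩ := hpos₂
  constructor
  · linarith
  · intro h; linarith
end

section
/- (No information without perturbation) Let T_x : M_n(ℂ) → M_n(ℂ), x ∈ X (X finite), be completely positive maps whose sum satisfies Σ_x T_x(A) = U* A U for all A, with U unitary. Then there exist nonnegative numbers p_x with Σ_x p_x = 1 such that T_x(A) = p_x · U* A U for all A and x. In particular, for any density matrix ρ, the probability tr(ρ T_x(I)) = p_x is independent of ρ. -/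
/-!
Through the Choi correspondence `T ↦ ∑ a b, T (E a b) ⊗ E a b`, which is linear and injective,
complete positivity of `T x` becomes positive semidefiniteness of its Choi matrix, and the Choi
matrix of `A ↦ Uᴴ A U` is the rank-one matrix `w wᴴ` with `w` the vectorisation of `Uᴴ`.
Positive semidefinite summands of `w wᴴ` vanish on `w⊥`, so each is a nonnegative multiple of
`w wᴴ`; hence `T x = p x • (Uᴴ · U)`, and evaluating `∑ x, T x` at `1` gives `∑ x, p x = 1`.
-/

open Finset Matrix ComplexOrder

namespace Matrix.PosSemidef

variable {m : Type*} [Fintype m] {C D : Matrix m m ℂ} {w : m → ℂ}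

theorem mulVec_eq_zero_of_add_eq_vecMulVec (hC : C.PosSemidef) (hD : D.PosSemidef)
    (h : C + D = vecMulVec w (star w)) {y : m → ℂ} (hy : star w ⬝ᵥ y = 0) : C *ᵥ y = 0 := by
  have hsum : star y ⬝ᵥ C *ᵥ y + star y ⬝ᵥ D *ᵥ y = 0 := by
    rw [← dotProduct_add, ← add_mulVec, h, vecMulVec_mulVec, hy]
    simp
  exact (hC.dotProduct_mulVec_zero_iff y).mp <|
    ((add_eq_zero_iff_of_nonneg (hC.dotProduct_mulVec_nonneg y)
      (hD.dotProduct_mulVec_nonneg y)).mp hsum).1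

theorem eq_smul_vecMulVec_of_mulVec_eq_zero (hC : C.PosSemidef)
    (h : ∀ y, star w ⬝ᵥ y = 0 → C *ᵥ y = 0) :
    ∃ c : ℝ, 0 ≤ c ∧ C = (c : ℂ) • vecMulVec w (star w) := by
  -- With `ν = ‖w‖²`: `C P = ν C` since `C` kills `w⊥`, `P C = ν C` by hermiticity,
  -- so `ν² C = P C P = (wᴴ C w) P`.
  set P := vecMulVec w (star w)
  by_cases hw : w = 0
  · refine ⟨0, le_rfl, ext_iff_mulVec.mpr fun y => ?_⟩
    simpa [hw] using h y (by simp [hw])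
  obtain ⟨ν, hν, hνN⟩ := RCLike.nonneg_iff_exists_ofReal.mp (dotProduct_star_self_nonneg w)
  obtain ⟨σ, hσ, hσs⟩ := RCLike.nonneg_iff_exists_ofReal.mp (hC.dotProduct_mulVec_nonneg w)
  have hν0 : ν ≠ 0 := by
    rintro rfl
    exact hw (dotProduct_star_self_eq_zero.mp (by simpa using hνN.symm))
  have hCP : C * P = (ν : ℂ) • C := by
    refine ext_iff_mulVec.mpr fun y => ?_
    have := h ((ν : ℂ) • y - (star w ⬝ᵥ y) • w) (by simp [dotProduct_sub, ← hνN, mul_comm])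
    rw [mulVec_sub, mulVec_smul, mulVec_smul, sub_eq_zero] at this
    rw [← mulVec_mulVec, vecMulVec_mulVec, op_smul_eq_smul, mulVec_smul, smul_mulVec, this]
  have hPC : P * C = (ν : ℂ) • C := by
    simpa [P, conjTranspose_vecMulVec, hC.isHermitian.eq] using congr_arg (·ᴴ) hCP
  have hPCP : P * C * P = (σ : ℂ) • P := by
    rw [vecMulVec_mul, vecMulVec_mul_vecMulVec, ← dotProduct_mulVec, ← hσs, vecMulVec_smul]
    rfl
  refine ⟨σ / ν ^ 2, by positivity, ?_⟩
  rw [Matrix.mul_assoc, hCP, mul_smul_comm, hPC, smul_smul] at hPCP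
  have hνν : (ν : ℂ) * ν ≠ 0 := by exact_mod_cast mul_ne_zero hν0 hν0
  refine smul_right_injective _ hνν ?_
  dsimp only
  rw [hPCP, smul_smul]
  congr 1
  push_cast
  field_simp

theorem eq_smul_vecMulVec_of_add_eq (hC : C.PosSemidef) (hD : D.PosSemidef)
    (h : C + D = vecMulVec w (star w)) :
    ∃ c : ℝ, 0 ≤ c ∧ C = (c : ℂ) • vecMulVec w (star w) :=
  hC.eq_smul_vecMulVec_of_mulVec_eq_zero fun _ => hC.mulVec_eq_zero_of_add_eq_vecMulVec hD h

end Matrix.PosSemidef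

section Choi

variable {m R : Type*} [DecidableEq m]

def choiMatrix [CommSemiring R] :
    (Matrix m m R →ₗ[R] Matrix m m R) →ₗ[R] Matrix (m × m) (m × m) R where
  toFun T := of fun p q => T (single p.2 q.2 1) p.1 q.1
  map_add' _ _ := rfl
  map_smul' _ _ := rfl

theorem choiMatrix_apply [CommSemiring R] (T : Matrix m m R →ₗ[R] Matrix m m R) (p q : m × m) :
    choiMatrix T p q = T (single p.2 q.2 1) p.1 q.1 := rfl

theorem choiMatrix_injective [Fintype m] [CommSemiring R] :
    Function.Injective (choiMatrix : (Matrix m m R →ₗ[R] Matrix m m R) →ₗ[R] _) := by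
  intro S T h
  refine (stdBasis R m m).ext fun ⟨a, b⟩ => ?_
  ext i j
  rw [stdBasis_eq_single]
  exact congr($h (i, a) (j, b))

theorem choiMatrix_mulLeft_mulRight [Fintype m] [CommSemiring R] (K L : Matrix m m R) :
    choiMatrix (LinearMap.mulRight R L ∘ₗ LinearMap.mulLeft R K) =
      vecMulVec (fun p => K p.1 p.2) (fun q => L q.2 q.1) := by
  ext p q
  simp [choiMatrix_apply, vecMulVec_apply, mul_apply, single_apply, ite_and, Finset.sum_ite_eq]

theorem posSemidef_choiMatrix [Fintype m] [CommRing R] [PartialOrder R] [StarRing R]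
    [StarOrderedRing R]
    {T : Matrix m m R →ₗ[R] Matrix m m R}
    (hT : ∀ M : Matrix (m × m) (m × m) R, M.PosSemidef →
      (of fun p q : m × m => T (of fun i j => M (i, p.2) (j, q.2)) p.1 q.1).PosSemidef) :
    (choiMatrix T).PosSemidef := by
  -- `hT` is positivity of `T ⊗ id`; the Choi matrix is its value at `vec 1 (vec 1)ᴴ`.
  have hslice : ∀ a b : m,
      of (fun i j => vecMulVec (vec 1) (star (vec 1)) (i, a) (j, b)) = single a b (1 : R) := by
    intro a b
    ext i j
    simp only [vecMulVec_apply, vec, one_apply, Pi.star_apply, apply_ite star, star_one,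
      star_zero, mul_ite, mul_one, mul_zero, of_apply, single_apply]
    split_ifs <;> simp_all
  have h := hT _ (posSemidef_vecMulVec_self_star (vec (1 : Matrix m m R)))
  simp only [hslice] at h
  exact h

theorem exists_eq_smul_of_sum_eq_of_choiMatrix_eq_vecMulVec {X : Type*} [Fintype X]
    [Fintype m] {T : X → Matrix m m ℂ →ₗ[ℂ] Matrix m m ℂ} {Φ : Matrix m m ℂ →ₗ[ℂ] Matrix m m ℂ}
    {w : m × m → ℂ} (hT : ∀ x, (choiMatrix (T x)).PosSemidef) (hsum : ∑ x, T x = Φ)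
    (hΦ : choiMatrix Φ = vecMulVec w (star w)) (x : X) :
    ∃ c : ℝ, 0 ≤ c ∧ T x = (c : ℂ) • Φ := by
  classical
  have hsplit : choiMatrix (T x) + ∑ y ∈ univ.erase x, choiMatrix (T y) =
      vecMulVec w (star w) := by
    rw [add_sum_erase _ (fun y => choiMatrix (T y)) (mem_univ x), ← map_sum, hsum, hΦ]
  obtain ⟨c, hc, hcT⟩ :=
    (hT x).eq_smul_vecMulVec_of_add_eq (posSemidef_sum _ fun y _ => hT y) hsplit
  exact ⟨c, hc, choiMatrix_injective (by rw [map_smul, hΦ, hcT])⟩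

end Choi

/-- No information without perturbation: if completely positive maps T_x sum to a
    unitarily implemented channel A ↦ U*AU, then each T_x = p_x · (U* · U) for a
    probability distribution p, and the outcome probabilities tr(ρ T_x(1)) = p_x are
    independent of the input state ρ. -/
theorem stmt9 {X : Type*} [Fintype X] {n : ℕ} (hn : 0 < n)
    (T : X → Matrix (Fin n) (Fin n) ℂ →ₗ[ℂ] Matrix (Fin n) (Fin n) ℂ)
    (hcp : ∀ x (k : ℕ) (M : Matrix (Fin n × Fin k) (Fin n × Fin k) ℂ), M.PosSemidef →
      (Matrix.of fun p q : Fin n × Fin k =>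
        T x (Matrix.of fun i j => M (i, p.2) (j, q.2)) p.1 q.1).PosSemidef)
    (U : Matrix (Fin n) (Fin n) ℂ) (hU : U ∈ Matrix.unitaryGroup (Fin n) ℂ)
    (hsum : ∀ A, ∑ x, T x A = Uᴴ * A * U) :
    ∃ p : X → ℝ, (∀ x, 0 ≤ p x) ∧ (∑ x, p x = 1) ∧
      (∀ x A, T x A = (p x : ℂ) • (Uᴴ * A * U)) ∧
      (∀ x (ρ : Matrix (Fin n) (Fin n) ℂ), ρ.PosSemidef → ρ.trace = 1 →
        (ρ * T x 1).trace = (p x : ℂ)) := by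
  set Φ := LinearMap.mulRight ℂ U ∘ₗ LinearMap.mulLeft ℂ Uᴴ
  have hTΦ : ∑ x, T x = Φ := LinearMap.ext fun A => by simp [Φ, hsum]
  set w : Fin n × Fin n → ℂ := fun p => Uᴴ p.1 p.2
  have hchoiΦ : choiMatrix Φ = vecMulVec w (star w) := by
    rw [choiMatrix_mulLeft_mulRight]
    congr
    ext
    simp [w]
  choose p hp hTp using exists_eq_smul_of_sum_eq_of_choiMatrix_eq_vecMulVec
    (fun x => posSemidef_choiMatrix (hcp x n)) hTΦ hchoiΦ
  have hUU : Uᴴ * U = 1 := hU.1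
  have hp1 : ∑ x, p x = 1 := by
    have : Nonempty (Fin n) := ⟨⟨0, hn⟩⟩
    have h1 : ((∑ x, p x : ℝ) : ℂ) • (1 : Matrix (Fin n) (Fin n) ℂ) = (1 : ℂ) • 1 := by
      simpa [hTp, Φ, Finset.sum_smul, hUU] using hsum 1
    exact_mod_cast smul_left_injective ℂ one_ne_zero h1
  refine ⟨p, hp, hp1, fun x A => by rw [hTp]; rfl, fun x ρ _ hρ => ?_⟩
  rw [hTp, LinearMap.smul_apply, LinearMap.comp_apply, LinearMap.mulLeft_apply,
    LinearMap.mulRight_apply, Matrix.mul_one, hUU, mul_smul_comm, Matrix.mul_one, trace_smul, hρ,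
    smul_eq_mul, mul_one]
end

section
/- (Duality between bipartite states and channels, positivity direction) Let ρ be a density operator on H ⊗ K (finite-dimensional) whose restriction to H has spectral resolution with strictly positive eigenvalues r_k and eigenvectors e_k. Define T on B(K) by ⟨e'_k, T(|e_μ⟩⟨e_ν|) e'_ℓ⟩ = r_k^{-1/2} r_ℓ^{-1/2} ρ(|e_k ⊗ e_μ⟩⟨e_ℓ ⊗ e_ν|), where e'_k is an orthonormal basis of a space H' of dimension rank(ρ_H). Then T is completely positive and unital, and ρ = σ ∘ (id_H ⊗ T) where σ is the pure state given by Ψ = Σ_k √r_k e_k ⊗ e'_k. -/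
/-!
Write `E` for the matrix with columns `e_k`, `W = E r^{-1/2}`, `U = E r^{1/2}` (so `Ψ = vec Uᵀ`)
and `Φ(B)` for the partial trace of `ρ (1 ⊗ B)` over `K`. Then `T(B) = (Wᴴ Φ(B) W)ᵀ`.

* Complete positivity: the amplification of `T` to `M ≥ 0` factors as `Vᴴ (ρᵀ ⊗ M) V`.
* Unitality: `Φ(1) = ρ_H = E r Eᴴ` and `Eᴴ E = 1`.
* Duality: `⟨Ψ, (A ⊗ T(B)) Ψ⟩ = tr (ρ (QAQ ⊗ B))` with `Q = W Uᴴ = E Eᴴ`. Since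
  `tr (ρ ((1 - Q) ⊗ 1)) = tr (ρ_H (1 - Q)) = 0` and `ρ ≥ 0`, `ρ` is supported on `ran Q ⊗ K`,
  so `QAQ` may be replaced by `A`.
-/

open Finset Matrix ComplexOrder

open scoped Kronecker

namespace Matrix

variable {α β γ κ : Type*}

lemma mul_diagonal_inv_mul_conjTranspose_mul_diagonal [Fintype γ] [DecidableEq γ]
    (E : Matrix α γ ℂ) {d : γ → ℝ} (hd : ∀ k, d k ≠ 0) :
    E * diagonal (fun k => (d k : ℂ)⁻¹) * (E * diagonal fun k => (d k : ℂ))ᴴ = E * Eᴴ := by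
  rw [conjTranspose_mul, diagonal_conjTranspose, Matrix.mul_assoc,
    ← Matrix.mul_assoc (diagonal _), diagonal_mul_diagonal]
  simp [hd]

variable [Fintype α] [Fintype β]

def partialTraceRight (ρ : Matrix (α × β) (α × β) ℂ) : Matrix α α ℂ :=
  of fun i j => ∑ μ, ρ (i, μ) (j, μ)

lemma trace_mul_kronecker [DecidableEq α] (ρ : Matrix (α × β) (α × β) ℂ) (Y : Matrix α α ℂ)
    (B : Matrix β β ℂ) :
    (ρ * (Y ⊗ₖ B)).trace = (partialTraceRight (ρ * (1 ⊗ₖ B)) * Y).trace := by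
  simp only [trace, diag_apply, mul_apply, kroneckerMap_apply, Fintype.sum_prod_type,
    partialTraceRight, one_apply, ite_mul, one_mul, zero_mul, mul_ite, mul_zero, sum_ite_irrel,
    sum_const_zero, sum_ite_eq', mem_univ, ↓reduceIte, of_apply, sum_mul]
  refine sum_congr rfl fun j _ => ?_
  rw [Finset.sum_comm]
  exact sum_congr rfl fun _ _ => sum_congr rfl fun _ _ => sum_congr rfl fun _ _ => by ring

lemma trace_mul_kronecker_one [DecidableEq α] [DecidableEq β] (ρ : Matrix (α × β) (α × β) ℂ)
    (Y : Matrix α α ℂ) :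
    (ρ * (Y ⊗ₖ (1 : Matrix β β ℂ))).trace = (partialTraceRight ρ * Y).trace := by
  rw [trace_mul_kronecker, one_kronecker_one, Matrix.mul_one]

lemma trace_partialTraceRight [DecidableEq α] [DecidableEq β] (ρ : Matrix (α × β) (α × β) ℂ) :
    (partialTraceRight ρ).trace = ρ.trace := by
  simpa [one_kronecker_one] using (trace_mul_kronecker_one ρ 1).symm

open scoped MatrixOrder in
lemma PosSemidef.mul_eq_self_of_trace_mul_eq [DecidableEq α] {ρ P : Matrix α α ℂ}
    (hρ : ρ.PosSemidef) (hP : IsStarProjection P) (h : (ρ * P).trace = ρ.trace) : ρ * P = ρ := by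
  obtain ⟨C, rfl⟩ := CStarAlgebra.nonneg_iff_eq_star_mul_self.mp hρ.nonneg
  obtain ⟨hPP, hPH⟩ := hP.one_sub
  rw [IsSelfAdjoint, star_eq_conjTranspose] at hPH
  rw [star_eq_conjTranspose] at h ⊢
  have hC : C * (1 - P) = 0 := by
    rw [← trace_conjTranspose_mul_self_eq_zero_iff, conjTranspose_mul, hPH, Matrix.mul_assoc,
      trace_mul_comm, Matrix.mul_assoc, Matrix.mul_assoc, hPP.eq, ← Matrix.mul_assoc, mul_sub,
      trace_sub, Matrix.mul_one, h, sub_self]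
  rw [mul_sub, Matrix.mul_one, sub_eq_zero] at hC
  rw [Matrix.mul_assoc, ← hC]

lemma IsStarProjection.kronecker_one [DecidableEq β] {P : Matrix α α ℂ}
    (hP : IsStarProjection P) : IsStarProjection (P ⊗ₖ (1 : Matrix β β ℂ)) := by
  obtain ⟨hPP, hPH⟩ := hP
  refine ⟨?_, ?_⟩
  · rw [IsIdempotentElem, ← mul_kronecker_mul, hPP.eq, Matrix.mul_one]
  · rw [IsSelfAdjoint, star_eq_conjTranspose, conjTranspose_kronecker, conjTranspose_one,
      ← star_eq_conjTranspose, hPH.star_eq]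

lemma PosSemidef.mul_kronecker_one_eq_self [DecidableEq α] [DecidableEq β]
    {ρ : Matrix (α × β) (α × β) ℂ} (hρ : ρ.PosSemidef) {P : Matrix α α ℂ}
    (hP : IsStarProjection P) (hsupp : partialTraceRight ρ * P = partialTraceRight ρ) :
    ρ * (P ⊗ₖ (1 : Matrix β β ℂ)) = ρ :=
  hρ.mul_eq_self_of_trace_mul_eq hP.kronecker_one <| by
    rw [trace_mul_kronecker_one, hsupp, trace_partialTraceRight]

lemma isStarProjection_mul_conjTranspose [Fintype γ] [DecidableEq γ] {E : Matrix α γ ℂ}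
    (hE : Eᴴ * E = 1) : IsStarProjection (E * Eᴴ) :=
  ⟨by rw [IsIdempotentElem, Matrix.mul_assoc, ← Matrix.mul_assoc Eᴴ, hE, Matrix.one_mul],
    by rw [IsSelfAdjoint, star_eq_conjTranspose, conjTranspose_mul, conjTranspose_conjTranspose]⟩

lemma trace_vecMulVec_vec_mul_kronecker [Fintype γ] (U : Matrix α γ ℂ) (A : Matrix α α ℂ)
    (T : Matrix γ γ ℂ) :
    (vecMulVec (vec Uᵀ) (star (vec Uᵀ)) * (A ⊗ₖ T)).trace = (A * U * Tᵀ * Uᴴ).trace := by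
  rw [vecMulVec_mul, trace_vecMulVec, dotProduct_comm, ← dotProduct_mulVec, kronecker_mulVec_vec,
    star_vec_dotProduct_vec, ← trace_transpose]
  simp only [Matrix.mul_assoc, transpose_mul, transpose_transpose]
  rfl

variable [DecidableEq α]

/-- `T(B)_{kl} = tr (ρ (|w_k⟩⟨w_l| ⊗ B))` for the columns `w_k` of `W`; with `w_k = r_k^{-1/2} e_k`
this is the paper's `T` in the basis `e'_k` of `H'`. -/
def dualChannel (ρ : Matrix (α × β) (α × β) ℂ) (W : Matrix α γ ℂ) (B : Matrix β β ℂ) :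
    Matrix γ γ ℂ :=
  (Wᴴ * partialTraceRight (ρ * (1 ⊗ₖ B)) * W)ᵀ

lemma dualChannel_apply (ρ : Matrix (α × β) (α × β) ℂ) (W : Matrix α γ ℂ) (B : Matrix β β ℂ)
    (k l : γ) : dualChannel ρ W B k l =
      ∑ μ, ∑ ν, B μ ν * ∑ j, ∑ i, ρ (j, ν) (i, μ) * W i k * star (W j l) := by
  calc dualChannel ρ W B k l
      = ∑ i, ∑ j, ∑ ν, ∑ μ, B μ ν * (ρ (j, ν) (i, μ) * W i k * star (W j l)) := by
        simp only [dualChannel, partialTraceRight, mul_apply, kroneckerMap_apply, one_apply,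
          ite_mul, one_mul, zero_mul, mul_ite, mul_zero, Fintype.sum_prod_type, sum_ite_irrel,
          sum_const_zero, sum_ite_eq', mem_univ, ↓reduceIte, transpose_apply,
          conjTranspose_apply, RCLike.star_def, of_apply, mul_sum, sum_mul]
        exact sum_congr rfl fun _ _ => sum_congr rfl fun _ _ => sum_congr rfl fun _ _ =>
          sum_congr rfl fun _ _ => by ring
    _ = ∑ μ, ∑ ν, ∑ j, ∑ i, B μ ν * (ρ (j, ν) (i, μ) * W i k * star (W j l)) := by
        simp only [← Finset.sum_product']
        exact Finset.sum_nbij' (fun x => (x.2.2.2, x.2.2.1, x.2.1, x.1))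
          (fun x => (x.2.2.2, x.2.2.1, x.2.1, x.1)) (by simp) (by simp) (by simp) (by simp)
          (by simp)
    _ = _ := by simp only [mul_sum]

theorem dualChannel_amplified_posSemidef [Fintype γ] [Fintype κ] [DecidableEq β] [DecidableEq κ]
    {ρ : Matrix (α × β) (α × β) ℂ} (hρ : ρ.PosSemidef) (W : Matrix α γ ℂ)
    {M : Matrix (β × κ) (β × κ) ℂ} (hM : M.PosSemidef) :
    (of fun p q : γ × κ =>
      dualChannel ρ W (of fun μ ν => M (μ, p.2) (ν, q.2)) p.1 q.1).PosSemidef := by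
  set V : Matrix ((α × β) × (β × κ)) (γ × κ) ℂ :=
    of fun z q => if z.1.2 = z.2.1 ∧ z.2.2 = q.2 then star (W z.1.1 q.1) else 0
  suffices h : (of fun p q : γ × κ =>
      dualChannel ρ W (of fun μ ν => M (μ, p.2) (ν, q.2)) p.1 q.1) = Vᴴ * (ρᵀ ⊗ₖ M) * V by
    rw [h]
    exact (hρ.transpose.kronecker hM).conjTranspose_mul_mul_same V
  ext ⟨k, s⟩ ⟨l, t⟩
  simp only [dualChannel, partialTraceRight, mul_apply, kroneckerMap_apply, one_apply, of_apply,
    ite_mul, one_mul, zero_mul, mul_ite, mul_zero, Fintype.sum_prod_type, sum_ite_irrel,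
    sum_const_zero, sum_ite_eq', mem_univ, ↓reduceIte, transpose_apply, conjTranspose_apply,
    RCLike.star_def, mul_sum, sum_mul, ite_and, apply_ite (starRingEnd ℂ),
    RingHomCompTriple.comp_apply, RingHom.id_apply, map_zero, sum_ite_eq, V]
  rw [Finset.sum_comm]
  refine sum_congr rfl fun j _ => ?_
  rw [Finset.sum_comm]
  exact sum_congr rfl fun _ _ => sum_congr rfl fun _ _ => sum_congr rfl fun _ _ => by ring

lemma dualChannel_one [DecidableEq β] (ρ : Matrix (α × β) (α × β) ℂ) (W : Matrix α γ ℂ) :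
    dualChannel ρ W 1 = (Wᴴ * partialTraceRight ρ * W)ᵀ := by
  rw [dualChannel, one_kronecker_one, Matrix.mul_one]

lemma dualChannel_one_eq_one [DecidableEq β] [Fintype γ] [DecidableEq γ]
    {ρ : Matrix (α × β) (α × β) ℂ} {E : Matrix α γ ℂ} (hE : Eᴴ * E = 1) {d : γ → ℝ}
    (hd : ∀ k, d k ≠ 0)
    (hptr : partialTraceRight ρ = E * diagonal (fun k => ((d k ^ 2 : ℝ) : ℂ)) * Eᴴ) :
    dualChannel ρ (E * diagonal fun k => (d k : ℂ)⁻¹) 1 = 1 := by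
  rw [dualChannel_one, hptr, conjTranspose_mul, diagonal_conjTranspose]
  simp only [Matrix.mul_assoc]
  rw [← Matrix.mul_assoc Eᴴ E, hE, Matrix.one_mul, ← Matrix.mul_assoc Eᴴ E, hE, Matrix.one_mul,
    diagonal_mul_diagonal, diagonal_mul_diagonal, ← diagonal_one, diagonal_transpose]
  congr 1
  ext k
  simp only [Pi.star_apply, star_inv₀, RCLike.star_def, Complex.conj_ofReal, Complex.ofReal_pow]
  field_simp [hd k]

theorem trace_mul_kronecker_eq_trace_vecMulVec_mul [DecidableEq β] [Fintype γ]
    {ρ : Matrix (α × β) (α × β) ℂ} (hρ : ρ.PosSemidef) {P : Matrix α α ℂ}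
    (hP : IsStarProjection P) (hsupp : partialTraceRight ρ * P = partialTraceRight ρ)
    {U W : Matrix α γ ℂ} (hWU : W * Uᴴ = P) (A : Matrix α α ℂ) (B : Matrix β β ℂ) :
    (ρ * (A ⊗ₖ B)).trace =
      (vecMulVec (vec Uᵀ) (star (vec Uᵀ)) * (A ⊗ₖ dualChannel ρ W B)).trace := by
  set Φ := partialTraceRight (ρ * (1 ⊗ₖ B))
  have hPH : Pᴴ = P := hP.isSelfAdjoint.star_eq
  have hUW : U * Wᴴ = P := by
    rw [← hPH, ← hWU, conjTranspose_mul, conjTranspose_conjTranspose]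
  have hρP : ρ * (P ⊗ₖ 1) = ρ := hρ.mul_kronecker_one_eq_self hP hsupp
  have hPρ : (P ⊗ₖ 1) * ρ = ρ := by
    simpa [conjTranspose_kronecker, hρ.isHermitian.eq, hPH] using congrArg conjTranspose hρP
  rw [trace_vecMulVec_vec_mul_kronecker, dualChannel, transpose_transpose]
  calc (ρ * (A ⊗ₖ B)).trace = ((P ⊗ₖ 1) * ρ * (P ⊗ₖ 1) * (A ⊗ₖ B)).trace := by rw [hPρ, hρP]
    _ = (ρ * ((P ⊗ₖ 1) * (A ⊗ₖ B) * (P ⊗ₖ 1))).trace := by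
      rw [Matrix.mul_assoc, Matrix.mul_assoc, trace_mul_comm]
      simp only [Matrix.mul_assoc]
    _ = (ρ * ((P * A * P) ⊗ₖ B)).trace := by
      rw [← mul_kronecker_mul, ← mul_kronecker_mul, Matrix.one_mul, Matrix.mul_one]
    _ = (Φ * (W * Uᴴ * A * (U * Wᴴ))).trace := by rw [hWU, hUW, trace_mul_kronecker]
    _ = ((A * U * Wᴴ) * (Φ * W * Uᴴ)).trace := by
      rw [trace_mul_comm (A * U * Wᴴ)]
      simp only [Matrix.mul_assoc]
    _ = (A * U * (Wᴴ * Φ * W) * Uᴴ).trace := by simp only [Matrix.mul_assoc]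

end Matrix

theorem stmt10_general {m n r : ℕ}
    (ρ : Matrix (Fin m × Fin n) (Fin m × Fin n) ℂ)
    (hρ : ρ.PosSemidef)
    (rr : Fin r → ℝ) (hrpos : ∀ k, 0 < rr k)
    (e : Fin r → Fin m → ℂ)
    (he : ∀ a b, ∑ i, star (e a i) * e b i = if a = b then (1 : ℂ) else 0)
    (hspec : ∀ i j, ∑ l, ρ (i, l) (j, l) = ∑ k, (rr k : ℂ) * e k i * star (e k j))
    (T : Matrix (Fin n) (Fin n) ℂ → Matrix (Fin r) (Fin r) ℂ)
    (hT : ∀ B k l, T B k l = ∑ μ, ∑ ν, B μ ν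
        * ((Real.sqrt (rr k) : ℂ))⁻¹ * ((Real.sqrt (rr l) : ℂ))⁻¹
        * (∑ j, ∑ i, ρ (j, ν) (i, μ) * e k i * star (e l j)))
    (Ψ : Fin m × Fin r → ℂ)
    (hΨ : ∀ p, Ψ p = (Real.sqrt (rr p.2) : ℂ) * e p.2 p.1) :
    (∀ (k' : ℕ) (M : Matrix (Fin n × Fin k') (Fin n × Fin k') ℂ), M.PosSemidef →
      (Matrix.of fun p q : Fin r × Fin k' =>
        T (Matrix.of fun μ ν => M (μ, p.2) (ν, q.2)) p.1 q.1).PosSemidef) ∧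
    T 1 = 1 ∧
    (∀ (A : Matrix (Fin m) (Fin m) ℂ) (B : Matrix (Fin n) (Fin n) ℂ),
      (ρ * Matrix.of fun p q : Fin m × Fin n => A p.1 q.1 * B p.2 q.2).trace =
      ((Matrix.of fun p q : Fin m × Fin r => Ψ p * star (Ψ q))
        * Matrix.of fun p q : Fin m × Fin r => A p.1 q.1 * T B p.2 q.2).trace) := by
  set E : Matrix (Fin m) (Fin r) ℂ := of fun i k => e k i
  set d : Fin r → ℝ := fun k => √(rr k)
  have hd : ∀ k, d k ≠ 0 := fun k => (Real.sqrt_pos.2 (hrpos k)).ne'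
  have hE : Eᴴ * E = 1 := by
    ext a b
    simpa [E, mul_apply, one_apply] using he a b
  have hptr : partialTraceRight ρ = E * diagonal (fun k => ((d k ^ 2 : ℝ) : ℂ)) * Eᴴ := by
    ext i j
    rw [mul_apply]
    simp only [partialTraceRight, of_apply, hspec, E, d, Real.sq_sqrt (hrpos _).le,
      mul_diagonal, conjTranspose_apply]
    congr! 1
    ring
  have hsupp : partialTraceRight ρ * (E * Eᴴ) = partialTraceRight ρ := by
    rw [hptr]
    simp only [Matrix.mul_assoc]
    rw [← Matrix.mul_assoc Eᴴ E, hE, Matrix.one_mul]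
  have hT' : T = dualChannel ρ (E * diagonal fun k => (d k : ℂ)⁻¹) := by
    funext B
    ext k l
    rw [hT, dualChannel_apply]
    simp only [E, d, mul_diagonal, of_apply, star_mul', star_inv₀, Complex.star_def,
      Complex.conj_ofReal, mul_sum]
    congr! 4
    ring
  have hΨ' : Ψ = vec (E * diagonal fun k => (d k : ℂ))ᵀ := by
    funext p
    simp [hΨ, E, d, mul_comm]
  subst hT' hΨ'
  exact ⟨fun _ _ hM => dualChannel_amplified_posSemidef hρ _ hM,
    dualChannel_one_eq_one hE hd hptr,
    trace_mul_kronecker_eq_trace_vecMulVec_mul hρ (isStarProjection_mul_conjTranspose hE) hsupp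
      (mul_diagonal_inv_mul_conjTranspose_mul_diagonal E hd)⟩

/-- Duality between bipartite states and channels: the map T defined from a bipartite
    density matrix ρ by ⟨e'_k, T(|e_μ⟩⟨e_ν|) e'_ℓ⟩ = r_k^{-1/2} r_ℓ^{-1/2} ρ(|e_k⊗e_μ⟩⟨e_ℓ⊗e_ν|)
    is completely positive and unital, and ρ = σ ∘ (id ⊗ T) for the pure state σ given
    by Ψ = Σ_k √r_k e_k ⊗ e'_k. -/
theorem stmt10 {m n r : ℕ}
    (ρ : Matrix (Fin m × Fin n) (Fin m × Fin n) ℂ)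
    (hρ : ρ.PosSemidef) (htr : ρ.trace = 1)
    (rr : Fin r → ℝ) (hrpos : ∀ k, 0 < rr k)
    (e : Fin r → Fin m → ℂ)
    (he : ∀ a b, ∑ i, star (e a i) * e b i = if a = b then (1 : ℂ) else 0)
    (hspec : ∀ i j, ∑ l, ρ (i, l) (j, l) = ∑ k, (rr k : ℂ) * e k i * star (e k j))
    (T : Matrix (Fin n) (Fin n) ℂ → Matrix (Fin r) (Fin r) ℂ)
    (hT : ∀ B k l, T B k l = ∑ μ, ∑ ν, B μ ν
        * ((Real.sqrt (rr k) : ℂ))⁻¹ * ((Real.sqrt (rr l) : ℂ))⁻¹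
        * (∑ j, ∑ i, ρ (j, ν) (i, μ) * e k i * star (e l j)))
    (Ψ : Fin m × Fin r → ℂ)
    (hΨ : ∀ p, Ψ p = (Real.sqrt (rr p.2) : ℂ) * e p.2 p.1) :
    (∀ (k' : ℕ) (M : Matrix (Fin n × Fin k') (Fin n × Fin k') ℂ), M.PosSemidef →
      (Matrix.of fun p q : Fin r × Fin k' =>
        T (Matrix.of fun μ ν => M (μ, p.2) (ν, q.2)) p.1 q.1).PosSemidef) ∧
    T 1 = 1 ∧
    (∀ (A : Matrix (Fin m) (Fin m) ℂ) (B : Matrix (Fin n) (Fin n) ℂ),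
      (ρ * Matrix.of fun p q : Fin m × Fin n => A p.1 q.1 * B p.2 q.2).trace =
      ((Matrix.of fun p q : Fin m × Fin r => Ψ p * star (Ψ q))
        * Matrix.of fun p q : Fin m × Fin r => A p.1 q.1 * T B p.2 q.2).trace) :=
  stmt10_general ρ hρ rr hrpos e he hspec T hT Ψ hΨ
end

section
/- (Core teleportation lemma) Let H, K be finite-dimensional Hilbert spaces, and Ω₁ ∈ K ⊗ H, Ω₂ ∈ H ⊗ K unit vectors and λ ∈ ℂ such that ⟨φ ⊗ Ω₁, Ω₂ ⊗ ψ⟩ = λ ⟨φ, ψ⟩ for all φ, ψ ∈ H. Then |λ| ≤ 1/dim H. -/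
open Finset

/-- Core teleportation lemma: if unit vectors Ω₁ ∈ K ⊗ H and Ω₂ ∈ H ⊗ K satisfy
    ⟨φ ⊗ Ω₁, Ω₂ ⊗ ψ⟩ = λ⟨φ,ψ⟩ for all φ, ψ ∈ H, then |λ| ≤ 1/dim H. -/
theorem stmt12 {m n : ℕ}
    (Ω₁ : Fin n × Fin m → ℂ) (Ω₂ : Fin m × Fin n → ℂ)
    (h₁ : ∑ p, ‖Ω₁ p‖ ^ 2 = 1) (h₂ : ∑ p, ‖Ω₂ p‖ ^ 2 = 1)
    (lam : ℂ)
    (h : ∀ φ ψ : Fin m → ℂ,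
      ∑ i, ∑ l, ∑ j, star (φ i * Ω₁ (l, j)) * (Ω₂ (i, l) * ψ j)
        = lam * ∑ i, star (φ i) * ψ i) :
    ‖lam‖ ≤ 1 / (m : ℝ) := by
  -- m is positive
  have hm : 0 < m := by
    rcases Nat.eq_zero_or_pos m with hm0 | hm0
    · exfalso
      subst hm0
      simp at h₂
    · exact hm0
  -- diagonal identity
  have hk : ∀ k : Fin m, ∑ l, star (Ω₁ (l, k)) * Ω₂ (k, l) = lam := by
    intro k
    have H := h (fun i => if i = k then 1 else 0) (fun j => if j = k then 1 else 0)
    simpa [apply_ite, mul_ite, ite_mul, star_mul, mul_comm, mul_assoc, mul_left_comm]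
      using H
  have key : ∑ p : Fin m × Fin n, star (Ω₁ (p.2, p.1)) * Ω₂ p = (m : ℂ) * lam := by
    rw [Fintype.sum_prod_type]
    calc ∑ k : Fin m, ∑ l : Fin n, star (Ω₁ (l, k)) * Ω₂ (k, l)
        = ∑ _k : Fin m, lam := Finset.sum_congr rfl (fun k _ => hk k)
      _ = (m : ℂ) * lam := by simp [mul_comm]
  -- Cauchy-Schwarz
  have hb : ‖(m : ℂ) * lam‖ ≤ 1 := by
    rw [← key]
    have h1' : ∑ p : Fin m × Fin n, ‖Ω₁ (p.2, p.1)‖ ^ 2 = 1 := by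
      rw [← h₁]
      exact Fintype.sum_equiv (Equiv.prodComm _ _) _ _ (fun p => rfl)
    have hcs := Real.sum_mul_le_sqrt_mul_sqrt Finset.univ
      (fun p : Fin m × Fin n => ‖Ω₁ (p.2, p.1)‖) (fun p => ‖Ω₂ p‖)
    calc ‖∑ p : Fin m × Fin n, star (Ω₁ (p.2, p.1)) * Ω₂ p‖
        ≤ ∑ p : Fin m × Fin n, ‖Ω₁ (p.2, p.1)‖ * ‖Ω₂ p‖ := by
          refine (norm_sum_le _ _).trans_eq ?_
          exact Finset.sum_congr rfl (fun p _ => by rw [norm_mul, norm_star])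
      _ ≤ 1 := by
          have := hcs
          rw [h1', h₂] at this
          simpa using this
  have : (m : ℝ) * ‖lam‖ ≤ 1 := by
    have := hb
    rwa [norm_mul, Complex.norm_natCast] at this
  rw [le_div_iff₀ (by exact_mod_cast hm)]
  linarith [this]
end

section
/- (Equality case of teleportation lemma) With the hypotheses of the previous lemma, |λ| = 1/dim H holds if and only if Ω₁ and Ω₂ are maximally entangled and Ω₂ equals Ω₁ with the two tensor factors exchanged (up to the phase λ/|λ|), i.e., if Ω₁ = Σ_k √w_k f_k ⊗ e_k is a Schmidt decomposition then all w_k = 1/dim H and ⟨e_n ⊗ f_m, Ω₂⟩ = λ w_m^{-1/2} δ_{nm}. -/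
open Finset

/-- Equality case of the teleportation lemma: |λ| = 1/dim H holds iff Ω₁ is maximally
    entangled (all Schmidt weights equal 1/dim H) and Ω₂ equals Ω₁ with the tensor
    factors exchanged, up to the phase determined by λ. -/
theorem stmt13 {m n r : ℕ}
    (Ω₁ : Fin n × Fin m → ℂ) (Ω₂ : Fin m × Fin n → ℂ)
    (h₁ : ∑ p, ‖Ω₁ p‖ ^ 2 = 1) (h₂ : ∑ p, ‖Ω₂ p‖ ^ 2 = 1)
    (lam : ℂ)
    (h : ∀ φ ψ : Fin m → ℂ,
      ∑ i, ∑ l, ∑ j, star (φ i * Ω₁ (l, j)) * (Ω₂ (i, l) * ψ j)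
        = lam * ∑ i, star (φ i) * ψ i)
    (w : Fin r → ℝ) (hw : ∀ k, 0 < w k) (hws : ∑ k, w k = 1)
    (f : Fin r → Fin n → ℂ) (e : Fin r → Fin m → ℂ)
    (hf : ∀ a b, ∑ l, star (f a l) * f b l = if a = b then (1 : ℂ) else 0)
    (he : ∀ a b, ∑ i, star (e a i) * e b i = if a = b then (1 : ℂ) else 0)
    (hΩ₁ : ∀ p, Ω₁ p = ∑ k, (Real.sqrt (w k) : ℂ) * f k p.1 * e k p.2) :
    ‖lam‖ = 1 / (m : ℝ) ↔
      ((∀ k, w k = 1 / (m : ℝ)) ∧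
       ∀ p : Fin m × Fin n,
         Ω₂ p = lam * (m : ℂ) * ∑ k, (Real.sqrt (w k) : ℂ) * e k p.1 * f k p.2) := by
  have key : ∀ z : ℂ, star z * z = ((‖z‖ ^ 2 : ℝ) : ℂ) := by
    intro z
    rw [Complex.star_def, Complex.sq_norm, ← Complex.mul_conj]
    ring
  have hm : 0 < m := by
    by_contra hm
    push_neg at hm
    interval_cases m
    simp at h₂
  have hm' : (0 : ℝ) < m := by exact_mod_cast hm
  have h₂' : ∑ p : Fin m × Fin n, star (Ω₂ p) * Ω₂ p = 1 := by
    simp_rw [key]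
    rw [← Complex.ofReal_sum, h₂, Complex.ofReal_one]
  -- Step A
  have hA : ∀ i j : Fin m, ∑ l, star (Ω₁ (l, j)) * Ω₂ (i, l)
      = if i = j then lam else 0 := by
    intro i j
    have := h (fun x => if x = i then 1 else 0) (fun x => if x = j then 1 else 0)
    simp [apply_ite, mul_ite, ite_mul, mul_comm, Finset.sum_ite_eq'] at this
    rcases eq_or_ne i j with rfl | hij
    · simpa [mul_comm] using this
    · simp [hij, Ne.symm hij] at this ⊢
      simpa [mul_comm] using this
  set c : Fin r → Fin m → ℂ := fun k i => ∑ l, star (f k l) * Ω₂ (i, l) with hc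
  have hc' : ∀ k i, c k i = ∑ l, star (f k l) * Ω₂ (i, l) := fun k i => rfl
  -- Step B
  have hB : ∀ i j : Fin m, ∑ k, (Real.sqrt (w k) : ℂ) * (star (e k j) * c k i)
      = if i = j then lam else 0 := by
    intro i j
    rw [← hA i j]
    simp_rw [hΩ₁, hc', star_sum, Finset.sum_mul, Finset.mul_sum, star_mul',
      Complex.star_def, Complex.conj_ofReal]
    rw [Finset.sum_comm]
    refine Finset.sum_congr rfl fun k _ => Finset.sum_congr rfl fun l _ => ?_
    ring
  -- Step C
  have hC : ∀ k i, (Real.sqrt (w k) : ℂ) * c k i = lam * e k i := by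
    intro k' i
    have h1 : ∑ j, (∑ k, (Real.sqrt (w k) : ℂ) * (star (e k j) * c k i)) * e k' j
        = ∑ j, (if i = j then lam else 0) * e k' j :=
      Finset.sum_congr rfl fun j _ => by rw [hB i j]
    have h2 : ∑ j, (if i = j then lam else 0) * e k' j = lam * e k' i := by
      simp [ite_mul, Finset.sum_ite_eq]
    have h3 : ∑ j, (∑ k, (Real.sqrt (w k) : ℂ) * (star (e k j) * c k i)) * e k' j
        = (Real.sqrt (w k') : ℂ) * c k' i := by
      simp_rw [Finset.sum_mul]
      rw [Finset.sum_comm]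
      have step : ∀ k, ∑ j, (Real.sqrt (w k) : ℂ) * (star (e k j) * c k i) * e k' j
          = (Real.sqrt (w k) : ℂ) * c k i * (if k = k' then 1 else 0) := by
        intro k
        rw [← he k k', Finset.mul_sum]
        exact Finset.sum_congr rfl fun j _ => by ring
      simp_rw [step]
      simp [mul_ite, Finset.sum_ite_eq']
    rw [h3] at h1
    rw [h2] at h1
    exact h1
  have hsq : ∀ k, ((Real.sqrt (w k) : ℝ) : ℂ) ≠ 0 := by
    intro k
    simp only [ne_eq, Complex.ofReal_eq_zero]
    exact ne_of_gt (Real.sqrt_pos.mpr (hw k))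
  have hC' : ∀ k i, c k i = lam * ((Real.sqrt (w k) : ℝ) : ℂ)⁻¹ * e k i := by
    intro k i
    have hscc : ((Real.sqrt (w k) : ℝ) : ℂ)⁻¹ * (((Real.sqrt (w k) : ℝ) : ℂ) * c k i)
        = c k i := by
      rw [← mul_assoc, inv_mul_cancel₀ (hsq k), one_mul]
    calc c k i = ((Real.sqrt (w k) : ℝ) : ℂ)⁻¹ * (((Real.sqrt (w k) : ℝ) : ℂ) * c k i) :=
          hscc.symm
      _ = ((Real.sqrt (w k) : ℝ) : ℂ)⁻¹ * (lam * e k i) := by rw [hC k i]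
      _ = lam * ((Real.sqrt (w k) : ℝ) : ℂ)⁻¹ * e k i := by ring
  have hsstar : ∀ k, star (((Real.sqrt (w k) : ℝ) : ℂ)⁻¹) = ((Real.sqrt (w k) : ℝ) : ℂ)⁻¹ := by
    intro k
    rw [← Complex.ofReal_inv, Complex.star_def, Complex.conj_ofReal]
  have hSc : ∀ k i, ∑ l, star (Ω₂ (i, l)) * f k l = star (c k i) := by
    intro k i
    rw [hc', star_sum]
    refine Finset.sum_congr rfl fun l _ => ?_
    rw [star_mul', star_star]
    ring
  have inner1 : ∀ i, ∑ l, star (Ω₂ (i, l)) * (∑ k, c k i * f k l)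
      = ∑ k, star (c k i) * c k i := by
    intro i
    simp_rw [Finset.mul_sum]
    rw [Finset.sum_comm]
    refine Finset.sum_congr rfl fun k _ => ?_
    have step : ∑ l, star (Ω₂ (i, l)) * (c k i * f k l)
        = c k i * ∑ l, star (Ω₂ (i, l)) * f k l := by
      rw [Finset.mul_sum]
      exact Finset.sum_congr rfl fun l _ => by ring
    rw [step, hSc k i]
    exact mul_comm _ _
  have inner2 : ∀ i, ∑ l, star (∑ k, c k i * f k l) * Ω₂ (i, l)
      = ∑ k, star (c k i) * c k i := by
    intro i
    simp_rw [star_sum, Finset.sum_mul]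
    rw [Finset.sum_comm]
    refine Finset.sum_congr rfl fun k _ => ?_
    have step : ∑ l, star (c k i * f k l) * Ω₂ (i, l)
        = star (c k i) * ∑ l, star (f k l) * Ω₂ (i, l) := by
      rw [Finset.mul_sum]
      exact Finset.sum_congr rfl fun l _ => by rw [star_mul']; ring
    rw [step, ← hc']
  have inner3 : ∀ i, ∑ l, star (∑ k, c k i * f k l) * (∑ k, c k i * f k l)
      = ∑ k, star (c k i) * c k i := by
    intro i
    simp_rw [star_sum, Finset.sum_mul, Finset.mul_sum]
    rw [Finset.sum_comm]
    refine Finset.sum_congr rfl fun k _ => ?_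
    rw [Finset.sum_comm]
    calc ∑ k', ∑ l, star (c k i * f k l) * (c k' i * f k' l)
        = ∑ k', star (c k i) * c k' i * ∑ l, star (f k l) * f k' l := by
          refine Finset.sum_congr rfl fun k' _ => ?_
          rw [Finset.mul_sum]
          exact Finset.sum_congr rfl fun l _ => by rw [star_mul']; ring
      _ = star (c k i) * c k i := by
          simp_rw [hf]
          simp [mul_ite, Finset.sum_ite_eq]
  have EB : ∑ p : Fin m × Fin n, star (Ω₂ p) * (∑ k, c k p.1 * f k p.2)
      = ∑ k, ∑ i, star (c k i) * c k i := by
    rw [Fintype.sum_prod_type]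
    calc ∑ i : Fin m, ∑ l : Fin n, star (Ω₂ (i, l)) * (∑ k, c k i * f k l)
        = ∑ i : Fin m, ∑ k, star (c k i) * c k i :=
          Finset.sum_congr rfl fun i _ => inner1 i
      _ = ∑ k, ∑ i, star (c k i) * c k i := Finset.sum_comm
  have EC : ∑ p : Fin m × Fin n, star (∑ k, c k p.1 * f k p.2) * Ω₂ p
      = ∑ k, ∑ i, star (c k i) * c k i := by
    rw [Fintype.sum_prod_type]
    calc ∑ i : Fin m, ∑ l : Fin n, star (∑ k, c k i * f k l) * Ω₂ (i, l)
        = ∑ i : Fin m, ∑ k, star (c k i) * c k i :=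
          Finset.sum_congr rfl fun i _ => inner2 i
      _ = ∑ k, ∑ i, star (c k i) * c k i := Finset.sum_comm
  have ED : ∑ p : Fin m × Fin n, star (∑ k, c k p.1 * f k p.2) * (∑ k, c k p.1 * f k p.2)
      = ∑ k, ∑ i, star (c k i) * c k i := by
    rw [Fintype.sum_prod_type]
    calc ∑ i : Fin m, ∑ l : Fin n, star (∑ k, c k i * f k l) * (∑ k, c k i * f k l)
        = ∑ i : Fin m, ∑ k, star (c k i) * c k i :=
          Finset.sum_congr rfl fun i _ => inner3 i
      _ = ∑ k, ∑ i, star (c k i) * c k i := Finset.sum_comm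
  have hbessel : ∑ p : Fin m × Fin n,
      star (Ω₂ p - ∑ k, c k p.1 * f k p.2) * (Ω₂ p - ∑ k, c k p.1 * f k p.2)
      = 1 - ∑ k, ∑ i, star (c k i) * c k i := by
    have expand : ∀ p : Fin m × Fin n,
        star (Ω₂ p - ∑ k, c k p.1 * f k p.2) * (Ω₂ p - ∑ k, c k p.1 * f k p.2)
        = star (Ω₂ p) * Ω₂ p - star (Ω₂ p) * (∑ k, c k p.1 * f k p.2)
          - star (∑ k, c k p.1 * f k p.2) * Ω₂ p
          + star (∑ k, c k p.1 * f k p.2) * (∑ k, c k p.1 * f k p.2) := by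
      intro p; rw [star_sub]; ring
    simp_rw [expand]
    rw [Finset.sum_add_distrib, Finset.sum_sub_distrib, Finset.sum_sub_distrib,
      h₂', EB, EC, ED]
    ring
  have csumk : ∀ k, ∑ i, star (c k i) * c k i
      = star lam * lam * (((w k)⁻¹ : ℝ) : ℂ) := by
    intro k
    have hinv : ((Real.sqrt (w k) : ℝ) : ℂ)⁻¹ * ((Real.sqrt (w k) : ℝ) : ℂ)⁻¹
        = (((w k)⁻¹ : ℝ) : ℂ) := by
      rw [← mul_inv, ← Complex.ofReal_mul, Real.mul_self_sqrt (hw k).le,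
        ← Complex.ofReal_inv]
    have hck : ∀ i, star (c k i) * c k i
        = star lam * lam * (((w k)⁻¹ : ℝ) : ℂ) * (star (e k i) * e k i) := by
      intro i
      rw [hC' k i, star_mul', star_mul', hsstar k]
      linear_combination (star lam * lam * star (e k i) * e k i) * hinv
    calc ∑ i, star (c k i) * c k i
        = ∑ i, star lam * lam * (((w k)⁻¹ : ℝ) : ℂ) * (star (e k i) * e k i) :=
          Finset.sum_congr rfl fun i _ => hck i
      _ = star lam * lam * (((w k)⁻¹ : ℝ) : ℂ) * ∑ i, star (e k i) * e k i := by
          rw [Finset.mul_sum]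
      _ = star lam * lam * (((w k)⁻¹ : ℝ) : ℂ) := by rw [he k k, if_pos rfl, mul_one]
  have hbessel2 : ∑ p : Fin m × Fin n, ‖Ω₂ p - ∑ k, c k p.1 * f k p.2‖ ^ 2
      = 1 - ‖lam‖ ^ 2 * ∑ k, (w k)⁻¹ := by
    have hcx := hbessel
    simp_rw [csumk] at hcx
    rw [← Finset.mul_sum, key lam] at hcx
    simp_rw [key] at hcx
    rw [← Complex.ofReal_sum, ← Complex.ofReal_sum] at hcx
    exact_mod_cast hcx
  have hinvid : ∀ k, w k = 1 / (m : ℝ) →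
      ((Real.sqrt (w k) : ℝ) : ℂ)⁻¹ = (m : ℂ) * ((Real.sqrt (w k) : ℝ) : ℂ) := by
    intro k hk
    have hr : (Real.sqrt (w k))⁻¹ = (m : ℝ) * Real.sqrt (w k) := by
      have h1 : Real.sqrt (w k) * Real.sqrt (w k) = w k := Real.mul_self_sqrt (hw k).le
      have h1' : (m : ℝ) * Real.sqrt (w k) * Real.sqrt (w k) = 1 := by
        rw [mul_assoc, h1, hk]
        field_simp
      exact inv_eq_of_mul_eq_one_left h1'
    rw [← Complex.ofReal_inv, hr]
    push_cast
    ring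
  constructor
  · intro hlam
    have hlamne : lam ≠ 0 := by
      intro h0
      rw [h0, norm_zero] at hlam
      have : (0:ℝ) < 1 / m := by positivity
      linarith [hlam ▸ this]
    -- Step D : completeness
    have hD : ∀ i j : Fin m, ∑ k, e k i * star (e k j) = if i = j then 1 else 0 := by
      intro i j
      have hb := hB i j
      have h4 : ∑ k, (Real.sqrt (w k) : ℂ) * (star (e k j) * c k i)
          = lam * ∑ k, e k i * star (e k j) := by
        rw [Finset.mul_sum]
        refine Finset.sum_congr rfl fun k _ => ?_
        rw [hC' k i]
        have h6 : ((Real.sqrt (w k) : ℝ) : ℂ) * ((Real.sqrt (w k) : ℝ) : ℂ)⁻¹ = 1 :=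
          mul_inv_cancel₀ (hsq k)
        linear_combination (star (e k j) * lam * e k i) * h6
      rw [h4] at hb
      have hb' : lam * ∑ k, e k i * star (e k j) = lam * (if i = j then 1 else 0) := by
        rw [hb]; split <;> ring
      exact mul_left_cancel₀ hlamne hb'
    -- Step E : r = m
    have hrm : r = m := by
      have t1 : ∑ i : Fin m, ∑ k, e k i * star (e k i) = (m : ℂ) := by
        have h7 : ∑ i : Fin m, ∑ k, e k i * star (e k i) = ∑ _i : Fin m, (1 : ℂ) :=
          Finset.sum_congr rfl fun i _ => by simpa using hD i i
        rw [h7]; simp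
      have t2 : ∑ i : Fin m, ∑ k, e k i * star (e k i) = (r : ℂ) := by
        rw [Finset.sum_comm]
        have h8 : ∑ k, ∑ i, e k i * star (e k i) = ∑ _k : Fin r, (1 : ℂ) := by
          refine Finset.sum_congr rfl fun k _ => ?_
          calc ∑ i, e k i * star (e k i) = ∑ i, star (e k i) * e k i :=
                Finset.sum_congr rfl fun i _ => mul_comm _ _
            _ = 1 := by rw [he k k]; simp
        rw [h8]; simp
      have : (r : ℂ) = (m : ℂ) := by rw [← t1, ← t2]
      exact_mod_cast this
    have hlam2 : ‖lam‖ ^ 2 = 1 / (m : ℝ) ^ 2 := by rw [hlam]; ring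
    have hRnn : (0:ℝ) ≤ ∑ p : Fin m × Fin n, ‖Ω₂ p - ∑ k, c k p.1 * f k p.2‖ ^ 2 :=
      Finset.sum_nonneg fun p _ => sq_nonneg _
    have hAle : ∑ k, (w k)⁻¹ ≤ (m : ℝ) ^ 2 := by
      have h9 : 0 ≤ 1 - ‖lam‖ ^ 2 * ∑ k, (w k)⁻¹ := hbessel2 ▸ hRnn
      rw [hlam2] at h9
      have hm2 : (0:ℝ) < (m:ℝ)^2 := by positivity
      have h10 : 1/(m:ℝ)^2 * ∑ k, (w k)⁻¹ ≤ 1 := by linarith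
      calc ∑ k, (w k)⁻¹ = (m:ℝ)^2 * (1/(m:ℝ)^2 * ∑ k, (w k)⁻¹) := by
            field_simp
        _ ≤ (m:ℝ)^2 * 1 := mul_le_mul_of_nonneg_left h10 (le_of_lt hm2)
        _ = (m:ℝ)^2 := mul_one _
    -- Cauchy-Schwarz lower bound
    have hq : ∀ k, ((m : ℝ) * Real.sqrt (w k) - (Real.sqrt (w k))⁻¹) ^ 2
        = (m : ℝ) ^ 2 * w k - 2 * m + (w k)⁻¹ := by
      intro k
      have h1 : Real.sqrt (w k) * Real.sqrt (w k) = w k := Real.mul_self_sqrt (hw k).le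
      have h2 : Real.sqrt (w k) * (Real.sqrt (w k))⁻¹ = 1 :=
        mul_inv_cancel₀ (ne_of_gt (Real.sqrt_pos.mpr (hw k)))
      have h3 : (Real.sqrt (w k))⁻¹ * (Real.sqrt (w k))⁻¹ = (w k)⁻¹ := by
        rw [← mul_inv, h1]
      linear_combination ((m:ℝ)^2) * h1 - 2*(m:ℝ)*h2 + h3
    have hsum : ∑ k, ((m : ℝ) * Real.sqrt (w k) - (Real.sqrt (w k))⁻¹) ^ 2
        = ∑ k, (w k)⁻¹ - (m : ℝ) ^ 2 := by
      simp_rw [hq]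
      rw [Finset.sum_add_distrib, Finset.sum_sub_distrib, ← Finset.mul_sum, hws]
      simp only [Finset.sum_const, Finset.card_univ, Fintype.card_fin, nsmul_eq_mul]
      have hrm' : (r:ℝ) = (m:ℝ) := by exact_mod_cast hrm
      rw [hrm']
      ring
    have hAge : (m : ℝ) ^ 2 ≤ ∑ k, (w k)⁻¹ := by
      have h0 : (0:ℝ) ≤ ∑ k, ((m : ℝ) * Real.sqrt (w k) - (Real.sqrt (w k))⁻¹) ^ 2 :=
        Finset.sum_nonneg fun k _ => sq_nonneg _
      rw [hsum] at h0
      linarith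
    have hAeq : ∑ k, (w k)⁻¹ = (m : ℝ) ^ 2 := le_antisymm hAle hAge
    have hwk : ∀ k, w k = 1 / (m : ℝ) := by
      intro k
      have hz : ∑ k, ((m : ℝ) * Real.sqrt (w k) - (Real.sqrt (w k))⁻¹) ^ 2 = 0 := by
        rw [hsum, hAeq]; ring
      have := (Finset.sum_eq_zero_iff_of_nonneg (fun k _ => sq_nonneg _)).mp hz k
        (Finset.mem_univ k)
      have h5 : (m : ℝ) * Real.sqrt (w k) - (Real.sqrt (w k))⁻¹ = 0 :=
        pow_eq_zero_iff two_ne_zero |>.mp this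
      have h5' : (m : ℝ) * Real.sqrt (w k) = (Real.sqrt (w k))⁻¹ := sub_eq_zero.mp h5
      have h1 : Real.sqrt (w k) * Real.sqrt (w k) = w k := Real.mul_self_sqrt (hw k).le
      have h2 : Real.sqrt (w k) ≠ 0 := ne_of_gt (Real.sqrt_pos.mpr (hw k))
      have h6 : (m : ℝ) * w k = 1 := by
        have h7 := congrArg (fun x => x * Real.sqrt (w k)) h5'
        rw [mul_assoc, h1, inv_mul_cancel₀ h2] at h7
        exact h7
      rw [eq_div_iff (ne_of_gt hm')]
      linarith [h6]
    refine ⟨hwk, fun p => ?_⟩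
    have hRz : Ω₂ p - ∑ k, c k p.1 * f k p.2 = 0 := by
      have hs0 : ∑ p : Fin m × Fin n, ‖Ω₂ p - ∑ k, c k p.1 * f k p.2‖ ^ 2 = 0 := by
        rw [hbessel2, hlam2, hAeq]
        field_simp
        ring
      have := (Finset.sum_eq_zero_iff_of_nonneg (fun p _ => sq_nonneg _)).mp hs0 p
        (Finset.mem_univ p)
      have hnz : ‖Ω₂ p - ∑ k, c k p.1 * f k p.2‖ = 0 :=
        pow_eq_zero_iff two_ne_zero |>.mp this
      exact norm_eq_zero.mp hnz
    have hΩp : Ω₂ p = ∑ k, c k p.1 * f k p.2 := by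
      have := sub_eq_zero.mp hRz
      exact this
    rw [hΩp, Finset.mul_sum]
    refine Finset.sum_congr rfl fun k _ => ?_
    rw [hC' k p.1, hinvid k (hwk k)]
    ring
  · rintro ⟨hw', hΩ₂⟩
    have hrm2 : (r : ℝ) = m := by
      have hws' := hws
      simp_rw [hw'] at hws'
      rw [Finset.sum_const, Finset.card_univ, Fintype.card_fin, nsmul_eq_mul] at hws'
      field_simp at hws'
      exact_mod_cast hws'
    have hR0 : ∀ p : Fin m × Fin n, Ω₂ p - ∑ k, c k p.1 * f k p.2 = 0 := by
      intro p
      rw [sub_eq_zero, hΩ₂ p, Finset.mul_sum]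
      refine Finset.sum_congr rfl fun k _ => ?_
      rw [hC' k p.1, hinvid k (hw' k)]
      ring
    have hsuminv : ∑ k : Fin r, (((w k)⁻¹ : ℝ) : ℂ) = (((m : ℝ) ^ 2 : ℝ) : ℂ) := by
      have hik : ∀ k : Fin r, ((w k)⁻¹ : ℝ) = (m : ℝ) := by
        intro k; rw [hw' k]; simp
      simp_rw [hik]
      rw [Finset.sum_const, Finset.card_univ, Fintype.card_fin, nsmul_eq_mul]
      have hrc : (r : ℂ) = (m : ℂ) := by exact_mod_cast hrm2
      rw [hrc]
      push_cast
      ring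
    have hb0 : (0 : ℂ) = 1 - star lam * lam * (((m : ℝ) ^ 2 : ℝ) : ℂ) := by
      have hcx := hbessel
      simp_rw [hR0] at hcx
      simp only [star_zero, zero_mul, Finset.sum_const_zero] at hcx
      calc (0 : ℂ) = 1 - ∑ k, ∑ i, star (c k i) * c k i := hcx
        _ = 1 - star lam * lam * (((m : ℝ) ^ 2 : ℝ) : ℂ) := by
            simp_rw [csumk]
            rw [← Finset.mul_sum, hsuminv]
    have hreal : ‖lam‖ ^ 2 * (m : ℝ) ^ 2 = 1 := by
      rw [key lam] at hb0
      push_cast at hb0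
      have : (((‖lam‖ ^ 2 * (m:ℝ)^2 : ℝ)) : ℂ) = ((1:ℝ) : ℂ) := by
        push_cast
        linear_combination hb0
      exact_mod_cast this
    have hnn : (0:ℝ) ≤ ‖lam‖ := norm_nonneg lam
    have hlm : ‖lam‖ ^ 2 = (1 / (m : ℝ)) ^ 2 := by
      have hm2 : ((m:ℝ)^2) ≠ 0 := by positivity
      field_simp
      linear_combination hreal
    rw [← Real.sqrt_sq hnn, hlm, Real.sqrt_sq (by positivity : (0:ℝ) ≤ 1/(m:ℝ))]
end

section
/- (Dense coding forces maximal entanglement) Let ω₁ be a positive semidefinite operator on ℂ^d with tr(ω₁) = 1, and let U_x, x = 1,…,d², be unitaries on ℂ^d such that tr(ω₁ U_x* U_y) = δ_{xy}. Then ω₁ is invertible and ω₁ = (1/d)·I. -/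
/-!
Write `ω = s * s` with `s` Hermitian and put `V x = U x * s`. Cycling the trace turns the
hypothesis into `tr (V xᴴ * V y) = δ x y`, so the `d²` matrices `V x` form an orthonormal basis of
the `d²`-dimensional space of `d × d` matrices. Completeness of an orthonormal basis gives
`∑ x, V xᴴ * V x = d • 1`, while unitarity of `U x` gives `V xᴴ * V x = s * s = ω` for every `x`.
Hence `d² • ω = d • 1`.
-/

open Finset Matrix ComplexOrder

namespace Matrix

section Orthonormal

variable {m n ι R : Type*} [Fintype m] [Fintype n] [CommRing R] [StarRing R]

theorem of_star_vec_mul_conjTranspose (V : ι → Matrix m n R) :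
    of (fun x => star (vec (V x))) * (of fun x => star (vec (V x)))ᴴ =
      of fun x y => ((V x)ᴴ * V y).trace := by
  ext x y
  simp only [mul_apply, conjTranspose_apply, of_apply, star_star, ← star_vec_dotProduct_vec,
    dotProduct, Pi.star_apply]

variable [Fintype ι] [DecidableEq ι] [DecidableEq m] [DecidableEq n]

/-- The square matrix with rows `star (vec (V x))` has orthonormal rows, hence also orthonormal
columns. -/
theorem sum_vec_mul_star_vec_of_orthonormal (V : ι → Matrix m n R)
    (hcard : Fintype.card ι = Fintype.card m * Fintype.card n)
    (horth : ∀ x y, ((V x)ᴴ * V y).trace = if x = y then 1 else 0) (p q : n × m) :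
    ∑ x, vec (V x) p * star (vec (V x) q) = if p = q then 1 else 0 := by
  set N : Matrix ι (n × m) R := of fun x => star (vec (V x))
  have hrows : N * Nᴴ = 1 := by
    rw [of_star_vec_mul_conjTranspose]
    ext x y
    simp [horth, one_apply]
  have hcols : Nᴴ * N = 1 :=
    (mul_eq_one_comm_of_card_eq ι (n × m) R (by simp [hcard, mul_comm])).mp hrows
  simpa [N, mul_apply, one_apply] using congr_fun₂ hcols p q

theorem sum_conjTranspose_mul_self_of_orthonormal (V : ι → Matrix m n R)
    (hcard : Fintype.card ι = Fintype.card m * Fintype.card n)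
    (horth : ∀ x y, ((V x)ᴴ * V y).trace = if x = y then 1 else 0) :
    ∑ x, (V x)ᴴ * V x = (Fintype.card m : R) • 1 := by
  ext j l
  calc (∑ x, (V x)ᴴ * V x) j l = ∑ i, ∑ x, vec (V x) (l, i) * star (vec (V x) (j, i)) := by
        simp only [sum_apply, mul_apply, conjTranspose_apply, vec]
        rw [Finset.sum_comm]
        simp [mul_comm]
    _ = (Fintype.card m : R) • (1 : Matrix n n R) j l := by
        simp only [sum_vec_mul_star_vec_of_orthonormal V hcard horth, Prod.mk.injEq, and_true]
        simp [one_apply, eq_comm]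

end Orthonormal

section Square

variable {n R : Type*} [Fintype n] [CommRing R] [StarRing R]

theorem trace_conjTranspose_mul_of_mul_self_eq {s ω : Matrix n n R} (hs : sᴴ = s)
    (hω : s * s = ω) (A B : Matrix n n R) :
    ((A * s)ᴴ * (B * s)).trace = (ω * Aᴴ * B).trace := by
  rw [conjTranspose_mul, hs, ← hω, ← Matrix.mul_assoc, trace_mul_comm]
  simp only [Matrix.mul_assoc]

theorem conjTranspose_mul_self_unitary_mul [DecidableEq n] {U : Matrix n n R}
    (hU : U ∈ unitaryGroup n R) (s : Matrix n n R) :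
    (U * s)ᴴ * (U * s) = sᴴ * s := by
  rw [conjTranspose_mul, Matrix.mul_assoc, ← Matrix.mul_assoc Uᴴ, ← star_eq_conjTranspose U,
    Unitary.star_mul_self_of_mem hU, Matrix.one_mul]

open scoped MatrixOrder in
theorem PosSemidef.exists_isHermitian_mul_self_eq {𝕜 : Type*} [RCLike 𝕜] [DecidableEq n]
    {A : Matrix n n 𝕜} (hA : A.PosSemidef) : ∃ s : Matrix n n 𝕜, s.IsHermitian ∧ s * s = A :=
  ⟨CFC.sqrt A, (CFC.sqrt_nonneg A).posSemidef.1, CFC.sqrt_mul_sqrt_self A hA.nonneg⟩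

end Square

end Matrix

theorem stmt15_general {d : ℕ} (hd : 0 < d)
    (ω : Matrix (Fin d) (Fin d) ℂ) (hω : ω.PosSemidef)
    (U : Fin (d ^ 2) → Matrix (Fin d) (Fin d) ℂ)
    (hU : ∀ x, U x ∈ Matrix.unitaryGroup (Fin d) ℂ)
    (horth : ∀ x y, (ω * (U x)ᴴ * U y).trace = if x = y then (1 : ℂ) else 0) :
    IsUnit ω ∧ ω = ((d : ℂ))⁻¹ • 1 := by
  obtain ⟨s, hs, hss⟩ := hω.exists_isHermitian_mul_self_eq
  have hsum := sum_conjTranspose_mul_self_of_orthonormal (fun x => U x * s) (by simp [sq])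
    fun x y => by rw [trace_conjTranspose_mul_of_mul_self_eq hs.eq hss, horth]
  simp only [conjTranspose_mul_self_unitary_mul (hU _), hs.eq, hss, sum_const, card_univ,
    Fintype.card_fin] at hsum
  have hdC : (d : ℂ) ≠ 0 := by exact_mod_cast hd.ne'
  have hω_eq : ω = (d : ℂ)⁻¹ • 1 :=
    calc ω = ((d : ℂ) ^ 2)⁻¹ • ((d : ℂ) ^ 2 • ω) := (inv_smul_smul₀ (pow_ne_zero 2 hdC) ω).symm
      _ = ((d : ℂ) ^ 2)⁻¹ • ((d : ℂ) • 1) := by rw [← hsum, ← Nat.cast_pow, Nat.cast_smul_eq_nsmul]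
      _ = (d : ℂ)⁻¹ • 1 := by rw [smul_smul, sq, mul_inv, inv_mul_cancel_right₀ hdC]
  refine ⟨?_, hω_eq⟩
  rw [hω_eq, ← Algebra.algebraMap_eq_smul_one]
  exact (IsUnit.mk0 _ (inv_ne_zero hdC)).map _

/-- Dense coding forces maximal entanglement: if ω₁ is a density matrix on ℂ^d and
    U_1,…,U_{d²} are unitaries with tr(ω₁ U_x* U_y) = δ_{xy}, then ω₁ is invertible
    and ω₁ = (1/d)·I. -/
theorem stmt15 {d : ℕ} (hd : 0 < d)
    (ω : Matrix (Fin d) (Fin d) ℂ) (hω : ω.PosSemidef) (htr : ω.trace = 1)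
    (U : Fin (d ^ 2) → Matrix (Fin d) (Fin d) ℂ)
    (hU : ∀ x, U x ∈ Matrix.unitaryGroup (Fin d) ℂ)
    (horth : ∀ x y, (ω * (U x)ᴴ * U y).trace = if x = y then (1 : ℂ) else 0) :
    IsUnit ω ∧ ω = ((d : ℂ))⁻¹ • 1 :=
  stmt15_general hd ω hω U hU horth
end

section
/- If the vectors Φ_x, x = 1,…,d², in ℂ^d ⊗ ℂ^d satisfy ‖Φ_x‖ ≤ 1 and Σ_x |Φ_x⟩⟨Φ_x| = I, then every Φ_x is a unit vector and the Φ_x are pairwise orthogonal, hence form an orthonormal basis of ℂ^d ⊗ ℂ^d. -/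
open Finset

/-- If d² vectors Φ_x in ℂ^d ⊗ ℂ^d have norm at most 1 and Σ_x |Φ_x⟩⟨Φ_x| = I, then
    each Φ_x is a unit vector and the family is orthonormal, hence an orthonormal
    basis of ℂ^d ⊗ ℂ^d. -/
theorem stmt18 {d : ℕ} (Φ : Fin (d ^ 2) → Fin d × Fin d → ℂ)
    (hnorm : ∀ x, ∑ p, ‖Φ x p‖ ^ 2 ≤ 1)
    (hres : ∀ p q, ∑ x, Φ x p * star (Φ x q) = if p = q then (1 : ℂ) else 0) :
    (∀ x, ∑ p, ‖Φ x p‖ ^ 2 = 1) ∧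
    (∀ x y, ∑ p, star (Φ x p) * Φ y p = if x = y then (1 : ℂ) else 0) ∧
    Submodule.span ℂ (Set.range Φ) = ⊤ := by
  classical
  have hd : d * d = d ^ 2 := by ring
  let e : Fin d × Fin d ≃ Fin (d ^ 2) := finProdFinEquiv.trans (finCongr hd)
  set A : Matrix (Fin (d ^ 2)) (Fin (d ^ 2)) ℂ :=
    Matrix.of (fun x i => Φ x (e.symm i)) with hA
  -- star version of hres
  have hres' : ∀ p q, ∑ x, star (Φ x p) * Φ x q = if p = q then (1 : ℂ) else 0 := by
    intro p q
    have h := congrArg star (hres p q)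
    simpa [star_sum, mul_comm, apply_ite (star : ℂ → ℂ)] using h
  have h1 : A.conjTranspose * A = 1 := by
    ext i j
    simp only [Matrix.mul_apply, Matrix.conjTranspose_apply, Matrix.one_apply, hA,
      Matrix.of_apply]
    rw [hres' (e.symm i) (e.symm j)]
    simp [Equiv.symm_apply_eq]
  have h2 : A * A.conjTranspose = 1 := mul_eq_one_comm.mpr h1
  -- orthonormality
  have horth : ∀ x y, ∑ p, star (Φ x p) * Φ y p = if x = y then (1 : ℂ) else 0 := by
    intro x y
    have h := congrFun (congrFun h2 y) x
    simp only [Matrix.mul_apply, Matrix.conjTranspose_apply, Matrix.one_apply, hA,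
      Matrix.of_apply] at h
    have hsum : ∑ p, star (Φ x p) * Φ y p
        = ∑ i, Φ y (e.symm i) * star (Φ x (e.symm i)) := by
      rw [← Equiv.sum_comp e.symm (fun p => star (Φ x p) * Φ y p)]
      exact Finset.sum_congr rfl (fun i _ => mul_comm _ _)
    rw [hsum, h]
    simp [eq_comm]
  refine ⟨?_, horth, ?_⟩
  · intro x
    have h := horth x x
    simp only [if_true, eq_self_iff_true] at h
    have : ((∑ p, ‖Φ x p‖ ^ 2 : ℝ) : ℂ) = 1 := by
      push_cast
      rw [← h]
      exact Finset.sum_congr rfl fun p _ => by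
        rw [show star (Φ x p) = (starRingEnd ℂ) (Φ x p) from rfl, RCLike.conj_mul]; norm_cast
    exact_mod_cast this
  · rw [eq_top_iff]
    intro ψ _
    have key : ∀ p, ∑ x, (∑ q, star (Φ x q) * ψ q) * Φ x p = ψ p := by
      intro p
      have hrw : ∀ x, (∑ q, star (Φ x q) * ψ q) * Φ x p
          = ∑ q, ψ q * (Φ x p * star (Φ x q)) := by
        intro x; rw [Finset.sum_mul]; exact Finset.sum_congr rfl fun q _ => by ring
      simp_rw [hrw]
      rw [Finset.sum_comm]
      calc ∑ q, ∑ x, ψ q * (Φ x p * star (Φ x q))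
          = ∑ q, ψ q * (if p = q then (1:ℂ) else 0) := by
            refine Finset.sum_congr rfl fun q _ => ?_
            rw [← Finset.mul_sum, hres p q]
        _ = ψ p := by simp
    have hψ : ψ = ∑ x, (∑ q, star (Φ x q) * ψ q) • Φ x := by
      funext p
      simp only [Finset.sum_apply, Pi.smul_apply, smul_eq_mul]
      exact (key p).symm
    rw [hψ]
    exact Submodule.sum_mem _ fun x _ =>
      Submodule.smul_mem _ _ (Submodule.subset_span ⟨x, rfl⟩)
end
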